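/- arXiv:2501.04207 — 4 statements merged into one kernel-verified Lean document; each statement's English description precedes it below -/
import Mathlib

section
/- Let A be a unital Banach algebra with norm ‖·‖_A and ‖1‖_A = 1, and let J ⊆ A be a two-sided ideal equipped with a norm ‖·‖_J such that: (1) J is a Banach space (indeed a Banach algebra) in ‖·‖_J; (2) ‖j‖_A ≤ ‖j‖_J for all j ∈ J; and (3) ‖a·j·b‖_J ≤ ‖a‖_A·‖j‖_J·‖b‖_A for all a, b ∈ A and j ∈ J. Let τ : J → ℂ be a linear functional continuous with respect to ‖·‖_J such that τ(j·a) = τ(a·j) for all j ∈ J and a ∈ A (a hypertrace). Then for all T, W ∈ A with TW − WT ∈ J: the element W − exp(T)·W·exp(−T) lies in J, and τ(W − exp(T)·W·exp(−T)) = τ(WT − TW). -/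
open scoped Nat

open NormedSpace in
/-- Let `(A, J)` be a relative pair of Banach algebras (`J` an ideal of the unital Banach
algebra `A` with its own complete norm `nJ` satisfying `‖j‖ ≤ nJ j` and
`nJ (a*j*b) ≤ ‖a‖ * nJ j * ‖b‖`), and let `τ : J → ℂ` be a hypertrace.  If `TW - WT ∈ J`, then
`W - exp T * W * exp (-T) ∈ J` and `τ (W - exp T * W * exp (-T)) = τ (WT - TW)`. -/
theorem hypertrace_one_minus_exp_conj {A : Type*} [NormedRing A] [NormedAlgebra ℂ A]
    [CompleteSpace A] [NormOneClass A]
    (J : Set A) (nJ : A → ℝ) (τ : A → ℂ)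
    (hJ_zero : (0 : A) ∈ J)
    (hJ_add : ∀ x ∈ J, ∀ y ∈ J, x + y ∈ J)
    (hJ_neg : ∀ x ∈ J, -x ∈ J)
    (hJ_smul : ∀ (c : ℂ), ∀ x ∈ J, c • x ∈ J)
    (hJ_mul_left : ∀ a : A, ∀ x ∈ J, a * x ∈ J)
    (hJ_mul_right : ∀ a : A, ∀ x ∈ J, x * a ∈ J)
    (hnJ_add : ∀ x ∈ J, ∀ y ∈ J, nJ (x + y) ≤ nJ x + nJ y)
    (hnJ_smul : ∀ (c : ℂ), ∀ x ∈ J, nJ (c • x) = ‖c‖ * nJ x)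
    (hnJ_def : ∀ x ∈ J, (nJ x = 0 ↔ x = 0))
    (hnJ_mul : ∀ x ∈ J, ∀ y ∈ J, nJ (x * y) ≤ nJ x * nJ y)
    (hnJ_complete : ∀ u : ℕ → A, (∀ n, u n ∈ J) →
      (∀ ε > (0 : ℝ), ∃ N, ∀ m ≥ N, ∀ n ≥ N, nJ (u m - u n) < ε) →
      ∃ x ∈ J, ∀ ε > (0 : ℝ), ∃ N, ∀ n ≥ N, nJ (u n - x) < ε)
    (h_norm_le : ∀ x ∈ J, ‖x‖ ≤ nJ x)
    (h_abc : ∀ a b : A, ∀ x ∈ J, nJ (a * x * b) ≤ ‖a‖ * nJ x * ‖b‖)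
    (hτ_add : ∀ x ∈ J, ∀ y ∈ J, τ (x + y) = τ x + τ y)
    (hτ_smul : ∀ (c : ℂ), ∀ x ∈ J, τ (c • x) = c * τ x)
    (hτ_cont : ∃ C : ℝ, ∀ x ∈ J, ‖τ x‖ ≤ C * nJ x)
    (hτ_trace : ∀ x ∈ J, ∀ a : A, τ (x * a) = τ (a * x))
    (T W : A) (hTW : T * W - W * T ∈ J) :
    W - exp T * W * exp (-T) ∈ J ∧
      τ (W - exp T * W * exp (-T)) = τ (W * T - T * W) := by
  classical
  set C : A := T * W - W * T with hC_def
  have hC : C ∈ J := hTW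
  -- basic consequences
  have hnJ_zero : nJ 0 = 0 := (hnJ_def 0 hJ_zero).mpr rfl
  have hnJ_neg : ∀ x ∈ J, nJ (-x) = nJ x := by
    intro x hx
    have h := hnJ_smul (-1) x hx
    simpa using h
  have hnJ_nonneg : ∀ x ∈ J, 0 ≤ nJ x := by
    intro x hx
    have h1 : nJ (x + (-x)) ≤ nJ x + nJ (-x) := hnJ_add x hx (-x) (hJ_neg x hx)
    rw [add_neg_cancel, hnJ_zero, hnJ_neg x hx] at h1
    linarith
  have hJ_sub : ∀ x ∈ J, ∀ y ∈ J, x - y ∈ J := by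
    intro x hx y hy
    rw [sub_eq_add_neg]
    exact hJ_add x hx _ (hJ_neg y hy)
  have hτ_zero : τ 0 = 0 := by
    have h := hτ_smul 0 0 hJ_zero
    simpa using h
  have hτ_neg : ∀ x ∈ J, τ (-x) = - τ x := by
    intro x hx
    have h := hτ_smul (-1) x hx
    simpa using h
  obtain ⟨C₀, hC₀⟩ := hτ_cont
  have hτ_bound : ∀ x ∈ J, ‖τ x‖ ≤ |C₀| * nJ x := by
    intro x hx
    exact (hC₀ x hx).trans (mul_le_mul_of_nonneg_right (le_abs_self C₀) (hnJ_nonneg x hx))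
  -- finite sums
  have hJ_sum : ∀ (s : Finset ℕ) (f : ℕ → A), (∀ i ∈ s, f i ∈ J) → (∑ i ∈ s, f i) ∈ J := by
    intro s f hf
    exact Finset.sum_induction f (· ∈ J) (fun a b ha hb => hJ_add a ha b hb) hJ_zero hf
  have hτ_sum : ∀ (s : Finset ℕ) (f : ℕ → A), (∀ i ∈ s, f i ∈ J) →
      τ (∑ i ∈ s, f i) = ∑ i ∈ s, τ (f i) := by
    intro s f
    induction s using Finset.cons_induction with
    | empty => intro _; simpa using hτ_zero
    | cons a s ha ih =>
      intro hf
      rw [Finset.sum_cons, Finset.sum_cons,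
        hτ_add _ (hf a (Finset.mem_cons_self a s)) _
          (hJ_sum s f fun i hi => hf i (Finset.mem_cons_of_mem hi)),
        ih fun i hi => hf i (Finset.mem_cons_of_mem hi)]
  have hnJ_sum : ∀ (s : Finset ℕ) (f : ℕ → A), (∀ i ∈ s, f i ∈ J) →
      nJ (∑ i ∈ s, f i) ≤ ∑ i ∈ s, nJ (f i) := by
    intro s f
    induction s using Finset.cons_induction with
    | empty => intro _; simp [hnJ_zero]
    | cons a s ha ih =>
      intro hf
      rw [Finset.sum_cons, Finset.sum_cons]
      exact (hnJ_add _ (hf a (Finset.mem_cons_self a s)) _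
        (hJ_sum s f fun i hi => hf i (Finset.mem_cons_of_mem hi))).trans
        (by linarith [ih fun i hi => hf i (Finset.mem_cons_of_mem hi)])
  -- the commutator identity
  have key : ∀ n : ℕ, T^n * W - W * T^n = ∑ k ∈ Finset.range n, T^k * C * T^(n-1-k) := by
    intro n
    induction n with
    | zero => simp
    | succ n ih =>
      rw [Finset.sum_range_succ']
      have h0 : ∀ k ∈ Finset.range n,
          T^(k+1) * C * T^(n+1-1-(k+1)) = T * (T^k * C * T^(n-1-k)) := by
        intro k hk
        have h : n + 1 - 1 - (k+1) = n - 1 - k := by omega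
        rw [h, pow_succ']
        simp [mul_assoc]
      rw [Finset.sum_congr rfl h0, ← Finset.mul_sum, ← ih]
      simp only [pow_zero, one_mul, Nat.add_sub_cancel, Nat.sub_zero, hC_def]
      noncomm_ring
      simp only [← mul_assoc, ← pow_succ, ← pow_succ']
  have hterm_mem : ∀ k m : ℕ, T^k * C * T^m ∈ J :=
    fun k m => hJ_mul_right _ _ (hJ_mul_left _ C hC)
  set D : ℕ → A := fun n => T^n * W - W * T^n with hD_def
  have hD_mem : ∀ n, D n ∈ J := by
    intro n
    rw [hD_def]
    simp only
    rw [key n]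
    exact hJ_sum _ _ fun k _ => hterm_mem k _
  -- norm bounds
  set R : ℝ := ‖T‖ + 1 with hR_def
  have hR1 : (1:ℝ) ≤ R := by rw [hR_def]; linarith [norm_nonneg T]
  have hR0 : (0:ℝ) ≤ R := by linarith
  have hterm_bound : ∀ k m : ℕ, nJ (T^k * C * T^m) ≤ R^(k+m) * nJ C := by
    intro k m
    have h1 : nJ (T^k * C * T^m) ≤ ‖T^k‖ * nJ C * ‖T^m‖ := h_abc _ _ C hC
    have h2 : ‖T^k‖ ≤ R^k := (norm_pow_le T k).trans (pow_le_pow_left₀ (norm_nonneg T) (by simp [hR_def]) k)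
    have h3 : ‖T^m‖ ≤ R^m := (norm_pow_le T m).trans (pow_le_pow_left₀ (norm_nonneg T) (by simp [hR_def]) m)
    calc nJ (T^k * C * T^m) ≤ ‖T^k‖ * nJ C * ‖T^m‖ := h1
      _ ≤ R^k * nJ C * R^m := by
          have := hnJ_nonneg C hC
          gcongr
      _ = R^(k+m) * nJ C := by rw [pow_add]; ring
  have hD_bound : ∀ n : ℕ, nJ (D n) ≤ n * (R^n * nJ C) := by
    intro n
    have h1 : nJ (D n) ≤ ∑ k ∈ Finset.range n, nJ (T^k * C * T^(n-1-k)) := by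
      rw [hD_def]; simp only; rw [key n]
      exact hnJ_sum _ _ fun k _ => hterm_mem k _
    have h2 : ∀ k ∈ Finset.range n, nJ (T^k * C * T^(n-1-k)) ≤ R^n * nJ C := by
      intro k hk
      refine (hterm_bound k _).trans ?_
      have hk' : k < n := Finset.mem_range.mp hk
      have hle : k + (n - 1 - k) ≤ n := by omega
      exact mul_le_mul_of_nonneg_right (pow_le_pow_right₀ hR1 hle) (hnJ_nonneg C hC)
    calc nJ (D n) ≤ ∑ k ∈ Finset.range n, nJ (T^k * C * T^(n-1-k)) := h1
      _ ≤ ∑ _k ∈ Finset.range n, R^n * nJ C := Finset.sum_le_sum h2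
      _ = n * (R^n * nJ C) := by simp [Finset.sum_const, nsmul_eq_mul]
  -- the approximating sequence
  set u : ℕ → A := fun m => ∑ n ∈ Finset.range m, ((n ! : ℂ)⁻¹) • D n with hu_def
  have hterm2_mem : ∀ n : ℕ, ((n ! : ℂ)⁻¹) • D n ∈ J := fun n => hJ_smul _ _ (hD_mem n)
  have hu_mem : ∀ m, u m ∈ J := fun m => hJ_sum _ _ fun n _ => hterm2_mem n
  set q : ℕ → ℝ := fun n => (2*R)^n / n ! * nJ C with hq_def
  have hq_sum : Summable q := (Real.summable_pow_div_factorial (2*R)).mul_right (nJ C)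
  have hterm2_bound : ∀ n : ℕ, nJ (((n ! : ℂ)⁻¹) • D n) ≤ q n := by
    intro n
    rw [hnJ_smul _ _ (hD_mem n)]
    have h1 : ‖((n ! : ℂ)⁻¹)‖ = ((n ! : ℝ))⁻¹ := by
      simp
    rw [h1]
    have h2 : (n:ℝ) * (R^n * nJ C) ≤ (2*R)^n * nJ C := by
      have hn2 : (n:ℝ) ≤ 2^n := by
        exact_mod_cast (Nat.lt_two_pow_self (n := n)).le
      have := hnJ_nonneg C hC
      calc (n:ℝ) * (R^n * nJ C) = ((n:ℝ) * R^n) * nJ C := by ring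
        _ ≤ (2^n * R^n) * nJ C := by
            refine mul_le_mul_of_nonneg_right ?_ this
            exact mul_le_mul_of_nonneg_right hn2 (pow_nonneg hR0 n)
        _ = (2*R)^n * nJ C := by rw [mul_pow]
    have h3 : (0:ℝ) ≤ ((n ! : ℝ))⁻¹ := by positivity
    calc ((n ! : ℝ))⁻¹ * nJ (D n) ≤ ((n ! : ℝ))⁻¹ * ((n:ℝ) * (R^n * nJ C)) := by
          exact mul_le_mul_of_nonneg_left (hD_bound n) h3
      _ ≤ ((n ! : ℝ))⁻¹ * ((2*R)^n * nJ C) := mul_le_mul_of_nonneg_left h2 h3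
      _ = q n := by rw [hq_def]; ring
  have hsummable : Summable (fun n => nJ (((n ! : ℂ)⁻¹) • D n)) :=
    Summable.of_nonneg_of_le (fun n => hnJ_nonneg _ (hterm2_mem n)) hterm2_bound hq_sum
  -- Cauchy in nJ
  have hu_cauchy : ∀ ε > (0 : ℝ), ∃ N, ∀ m ≥ N, ∀ n ≥ N, nJ (u m - u n) < ε := by
    intro ε hε
    have hcs : CauchySeq (fun m => ∑ n ∈ Finset.range m, nJ (((n ! : ℂ)⁻¹) • D n)) :=
      hsummable.hasSum.tendsto_sum_nat.cauchySeq
    obtain ⟨N, hN⟩ := Metric.cauchySeq_iff.mp hcs ε hε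
    refine ⟨N, fun m hm n hn => ?_⟩
    have hmain : ∀ p r : ℕ, r ≤ p → nJ (u p - u r) ≤
        |(∑ i ∈ Finset.range p, nJ (((i ! : ℂ)⁻¹) • D i)) - ∑ i ∈ Finset.range r, nJ (((i ! : ℂ)⁻¹) • D i)| := by
      intro p r hrp
      have h1 : u p - u r = ∑ i ∈ Finset.Ico r p, ((i ! : ℂ)⁻¹) • D i := by
        rw [hu_def]
        exact (Finset.sum_Ico_eq_sub _ hrp).symm
      have h2 : (∑ i ∈ Finset.range p, nJ (((i ! : ℂ)⁻¹) • D i)) -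
          ∑ i ∈ Finset.range r, nJ (((i ! : ℂ)⁻¹) • D i) = ∑ i ∈ Finset.Ico r p, nJ (((i ! : ℂ)⁻¹) • D i) :=
        (Finset.sum_Ico_eq_sub _ hrp).symm
      rw [h1]
      refine le_trans ?_ (le_abs_self _)
      rw [h2]
      exact hnJ_sum _ _ fun i _ => hterm2_mem i
    rcases le_total n m with h | h
    · exact lt_of_le_of_lt (hmain m n h) (by simpa [Real.dist_eq] using hN m hm n hn)
    · have := hmain n m h
      have heq : nJ (u m - u n) = nJ (u n - u m) := by
        rw [show u m - u n = -(u n - u m) from (neg_sub (u n) (u m)).symm, hnJ_neg _ (hJ_sub _ (hu_mem n) _ (hu_mem m))]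
      rw [heq]
      exact lt_of_le_of_lt this (by simpa [Real.dist_eq] using hN n hn m hm)
  obtain ⟨S, hS_mem, hS_lim⟩ := hnJ_complete u hu_mem hu_cauchy
  -- identification of S
  have hP : HasSum (fun n : ℕ => ((n ! : ℂ)⁻¹) • T ^ n) (exp T) := exp_series_hasSum_exp' T
  set P : ℕ → A := fun m => ∑ n ∈ Finset.range m, ((n ! : ℂ)⁻¹) • T ^ n with hP_def
  have hPt : Filter.Tendsto P Filter.atTop (nhds (exp T)) := hP.tendsto_sum_nat
  have hu_eq : ∀ m, u m = P m * W - W * P m := by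
    intro m
    rw [hu_def, hP_def]
    simp only [hD_def, smul_sub, Finset.sum_sub_distrib, Finset.sum_mul, Finset.mul_sum,
      smul_mul_assoc, mul_smul_comm]
  have hnJ_tend : Filter.Tendsto (fun m => nJ (u m - S)) Filter.atTop (nhds 0) := by
    rw [Metric.tendsto_atTop]
    intro ε hε
    obtain ⟨N, hN⟩ := hS_lim ε hε
    refine ⟨N, fun n hn => ?_⟩
    rw [Real.dist_eq, sub_zero, abs_of_nonneg (hnJ_nonneg _ (hJ_sub _ (hu_mem n) _ hS_mem))]
    exact hN n hn
  have hS_tendA : Filter.Tendsto u Filter.atTop (nhds S) := by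
    rw [tendsto_iff_norm_sub_tendsto_zero]
    refine squeeze_zero (fun m => norm_nonneg _) (fun m => h_norm_le _ (hJ_sub _ (hu_mem m) _ hS_mem)) hnJ_tend
  have hS_tendA' : Filter.Tendsto u Filter.atTop (nhds (exp T * W - W * exp T)) := by
    have h1 : Filter.Tendsto (fun m => P m * W - W * P m) Filter.atTop
        (nhds (exp T * W - W * exp T)) :=
      ((hPt.mul tendsto_const_nhds).sub (tendsto_const_nhds.mul hPt))
    exact h1.congr fun m => (hu_eq m).symm
  have hS_eq : S = exp T * W - W * exp T := tendsto_nhds_unique hS_tendA hS_tendA'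
  -- the inverse exponential
  set E : A := exp (-T) with hE_def
  have hE1 : exp T * E = 1 := by
    rw [hE_def, ← exp_add_of_commute_of_mem_ball (𝕂 := ℂ) ((Commute.refl T).neg_right)
      ((expSeries_radius_eq_top ℂ A).symm ▸ edist_lt_top _ _)
      ((expSeries_radius_eq_top ℂ A).symm ▸ edist_lt_top _ _), add_neg_cancel, exp_zero]
  have hTE : ∀ k : ℕ, E * T ^ k = T ^ k * E := by
    intro k
    exact ((((Commute.refl T).neg_left).exp_left).pow_right k).eq
  -- the key trace computation
  have hDE_mem : ∀ n, D n * E ∈ J := fun n => hJ_mul_right _ _ (hD_mem n)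
  have hCTE_mem : ∀ m : ℕ, C * T ^ m * E ∈ J := fun m => hJ_mul_right _ _ (hJ_mul_right _ _ hC)
  have hDnE : ∀ n : ℕ, τ (D n * E) = (n : ℂ) * τ (C * T ^ (n-1) * E) := by
    intro n
    have h1 : D n * E = ∑ k ∈ Finset.range n, T^k * C * T^(n-1-k) * E := by
      rw [hD_def]; simp only; rw [key n, Finset.sum_mul]
    rw [h1, hτ_sum _ _ (fun k _ => hJ_mul_right _ _ (hterm_mem k _))]
    have h2 : ∀ k ∈ Finset.range n, τ (T^k * C * T^(n-1-k) * E) = τ (C * T^(n-1) * E) := by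
      intro k hk
      have hk' : k < n := Finset.mem_range.mp hk
      have h3 : T^k * C * T^(n-1-k) * E = T^k * (C * T^(n-1-k) * E) := by
        simp [mul_assoc]
      rw [h3, ← hτ_trace _ (hCTE_mem (n-1-k)) (T^k)]
      congr 1
      have h4 : n - 1 - k + k = n - 1 := by omega
      calc C * T^(n-1-k) * E * T^k = C * (T^(n-1-k) * (E * T^k)) := by simp [mul_assoc]
        _ = C * (T^(n-1-k) * (T^k * E)) := by rw [hTE]
        _ = C * (T^(n-1-k) * T^k) * E := by simp [mul_assoc]
        _ = C * T^(n-1) * E := by rw [← pow_add, h4]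
    rw [Finset.sum_congr rfl h2, Finset.sum_const, Finset.card_range, nsmul_eq_mul]
  have ha : ∀ m, τ (u m * E) =
      ∑ n ∈ Finset.range m, ((n ! : ℂ)⁻¹) * ((n : ℂ) * τ (C * T ^ (n-1) * E)) := by
    intro m
    have h1 : u m * E = ∑ n ∈ Finset.range m, ((n ! : ℂ)⁻¹) • (D n * E) := by
      rw [hu_def, Finset.sum_mul]
      simp [smul_mul_assoc]
    rw [h1, hτ_sum _ _ (fun n _ => hJ_smul _ _ (hDE_mem n))]
    refine Finset.sum_congr rfl fun n _ => ?_
    rw [hτ_smul _ _ (hDE_mem n), hDnE n]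
  have hb : ∀ m, τ (C * P m * E) =
      ∑ j ∈ Finset.range m, ((j ! : ℂ)⁻¹) * τ (C * T ^ j * E) := by
    intro m
    have h1 : C * P m * E = ∑ j ∈ Finset.range m, ((j ! : ℂ)⁻¹) • (C * T ^ j * E) := by
      rw [hP_def]
      simp only [Finset.mul_sum, Finset.sum_mul, mul_smul_comm, smul_mul_assoc]
    rw [h1, hτ_sum _ _ (fun j _ => hJ_smul _ _ (hCTE_mem j))]
    exact Finset.sum_congr rfl fun j _ => hτ_smul _ _ (hCTE_mem j)
  have hshift : ∀ m, τ (u (m+1) * E) = τ (C * P m * E) := by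
    intro m
    rw [ha, hb, Finset.sum_range_succ']
    have h0 : (((0:ℕ) ! : ℂ)⁻¹) * ((0:ℕ) : ℂ) * τ (C * T ^ (0-1) * E) = 0 := by simp
    simp only [Nat.cast_zero, zero_mul, mul_zero, add_zero, Nat.factorial_zero, Nat.cast_one,
      inv_one, one_mul]
    refine Finset.sum_congr rfl fun j _ => ?_
    have hfac : ((j+1)! : ℂ) = ((j:ℂ)+1) * (j ! : ℂ) := by
      rw [Nat.factorial_succ]; push_cast; ring
    have hne1 : ((j:ℂ)+1) ≠ 0 := Nat.cast_add_one_ne_zero j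
    have hne2 : ((j ! : ℂ)) ≠ 0 := by exact_mod_cast Nat.cast_ne_zero.mpr (Nat.factorial_ne_zero j)
    have : (((j+1)! : ℂ)⁻¹) * ((j:ℂ)+1) = ((j ! : ℂ)⁻¹) := by
      rw [hfac, mul_inv]
      field_simp
    rw [Nat.add_sub_cancel]
    push_cast
    rw [← mul_assoc, this]
  -- limits
  have hSE_mem : S * E ∈ J := hJ_mul_right _ _ hS_mem
  have huE_tend : Filter.Tendsto (fun m => τ (u m * E)) Filter.atTop (nhds (τ (S * E))) := by
    rw [tendsto_iff_norm_sub_tendsto_zero]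
    have hbd : ∀ m, ‖τ (u m * E) - τ (S * E)‖ ≤ (|C₀| * ‖E‖) * nJ (u m - S) := by
      intro m
      have hmem : (u m - S) * E ∈ J := hJ_mul_right _ _ (hJ_sub _ (hu_mem m) _ hS_mem)
      have h1 : τ (u m * E) - τ (S * E) = τ ((u m - S) * E) := by
        have h2 : (u m - S) * E + S * E = u m * E := by rw [← add_mul, sub_add_cancel]
        have h3 := hτ_add _ hmem _ hSE_mem
        rw [h2] at h3
        rw [h3]; ring
      rw [h1]
      refine (hτ_bound _ hmem).trans ?_
      have h4 : nJ ((u m - S) * E) ≤ nJ (u m - S) * ‖E‖ := by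
        have h5 := h_abc 1 E _ (hJ_sub _ (hu_mem m) _ hS_mem)
        simpa using h5
      calc |C₀| * nJ ((u m - S) * E) ≤ |C₀| * (nJ (u m - S) * ‖E‖) :=
            mul_le_mul_of_nonneg_left h4 (abs_nonneg C₀)
        _ = (|C₀| * ‖E‖) * nJ (u m - S) := by ring
    refine squeeze_zero (fun m => norm_nonneg _) hbd ?_
    have := hnJ_tend.const_mul (|C₀| * ‖E‖)
    simpa using this
  have hCPE_tend : Filter.Tendsto (fun m => τ (C * P m * E)) Filter.atTop
      (nhds (τ (C * exp T * E))) := by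
    rw [tendsto_iff_norm_sub_tendsto_zero]
    have hbd : ∀ m, ‖τ (C * P m * E) - τ (C * exp T * E)‖ ≤
        (|C₀| * nJ C * ‖E‖) * ‖P m - exp T‖ := by
      intro m
      have hmem : C * (P m - exp T) * E ∈ J := hJ_mul_right _ _ (hJ_mul_right _ _ hC)
      have h1 : τ (C * P m * E) - τ (C * exp T * E) = τ (C * (P m - exp T) * E) := by
        have h2 : C * (P m - exp T) * E + C * exp T * E = C * P m * E := by rw [← add_mul, ← mul_add, sub_add_cancel]
        have h3 := hτ_add _ hmem (C * exp T * E) (hJ_mul_right E _ (hJ_mul_right (exp T) C hC))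
        rw [h2] at h3
        rw [h3]; ring
      rw [h1]
      refine (hτ_bound _ hmem).trans ?_
      have h4 : nJ (C * (P m - exp T) * E) ≤ nJ C * ‖(P m - exp T) * E‖ := by
        have h5 := h_abc 1 ((P m - exp T) * E) C hC
        simpa [mul_assoc] using h5
      have h6 : ‖(P m - exp T) * E‖ ≤ ‖P m - exp T‖ * ‖E‖ := norm_mul_le _ _
      calc |C₀| * nJ (C * (P m - exp T) * E) ≤ |C₀| * (nJ C * (‖P m - exp T‖ * ‖E‖)) := by
            refine mul_le_mul_of_nonneg_left (h4.trans ?_) (abs_nonneg C₀)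
            exact mul_le_mul_of_nonneg_left h6 (hnJ_nonneg C hC)
        _ = (|C₀| * nJ C * ‖E‖) * ‖P m - exp T‖ := by ring
    refine squeeze_zero (fun m => norm_nonneg _) hbd ?_
    have h7 : Filter.Tendsto (fun m => ‖P m - exp T‖) Filter.atTop (nhds 0) := by
      rw [← tendsto_iff_norm_sub_tendsto_zero]
      exact hPt
    have := h7.const_mul (|C₀| * nJ C * ‖E‖)
    simpa using this
  have huE_tend' : Filter.Tendsto (fun m => τ (u (m+1) * E)) Filter.atTop (nhds (τ (S * E))) :=
    huE_tend.comp (Filter.tendsto_add_atTop_nat 1)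
  have hfin : τ (S * E) = τ (C * exp T * E) := by
    refine tendsto_nhds_unique ?_ hCPE_tend
    exact huE_tend'.congr hshift
  have hCE : C * exp T * E = C := by
    rw [mul_assoc, hE1, mul_one]
  -- assemble
  have hkey2 : W - exp T * W * E = -(S * E) := by
    rw [hS_eq, sub_mul, mul_assoc W, hE1, mul_one, neg_sub]
  constructor
  · rw [hkey2]
    exact hJ_neg _ hSE_mem
  · rw [hkey2, hτ_neg _ hSE_mem, hfin, hCE]
    have hnegC : -C = W * T - T * W := by rw [hC_def]; exact neg_sub _ _
    rw [← hnegC, hτ_neg _ hC]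
end

section
/- Let (A, J) be a relative pair of Banach algebras with ‖1‖_A = 1 and let τ : J → ℂ be a hypertrace. Let T, W ∈ A with TW − WT ∈ J, and define β : ℝ → A by β(t) = exp(tW)·exp(T)·exp(−tW)·exp(−T). Then for every t ∈ [0,1] the element W − exp(tW)·exp(T)·W·exp(−T)·exp(−tW), which equals β′(t)·β(t)⁻¹, lies in J, and −∫_0^1 τ(W − exp(tW)·exp(T)·W·exp(−T)·exp(−tW)) dt = τ(TW − WT). -/
/-!
Baker's formula `exp T * W * exp (-T) = ∑ (ad T)ⁿ W / n!` writes `exp T * W * exp (-T) - W` as the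
series of the iterated commutators `(ad T)ⁿ [T, W] / (n + 1)!`. These lie in `J`, with `J`-norms
at most `(2‖T‖)ⁿ / n! · ‖[T, W]‖_J`, so the series also converges in `J`, and to the same limit
since `‖·‖ ≤ ‖·‖_J`. A hypertrace vanishes on every commutator `[T, x]` with `x ∈ J`, so under `τ`
only the first term `[T, W]` survives. Since `W` commutes with `exp (tW)`, the integrand is `-τ`
of a conjugate of `exp T * W * exp (-T) - W`, i.e. the constant `-τ [T, W]`.
-/

open NormedSpace ContinuousLinearMap Filter Topology Finset
open scoped Nat

section Ring

variable {R : Type*} [Ring R] {g g' h h' W : R}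

theorem sub_conj_conj_eq_neg_conj (hg : g * g' = 1) (hW : Commute W g) :
    W - g * h * W * h' * g' = -(g * (h * W * h' - W) * g') := by
  rw [mul_sub, sub_mul, ← hW.eq, mul_assoc W, hg, mul_one, neg_sub]
  simp only [mul_assoc]

theorem commutator_conj_mul_conj_inv (hg : g * g' = 1) (hg' : g' * g = 1) (hh : h * h' = 1)
    (hh' : h' * h = 1) (hW : Commute W g) :
    (W * (g * h * g') - g * h * g' * W) * h' * (h * g * h' * g') = W - g * h * W * h' * g' := by
  have hWg : g' * W * g = W := by rw [mul_assoc, hW.eq, ← mul_assoc, hg', one_mul]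
  calc (W * (g * h * g') - g * h * g' * W) * h' * (h * g * h' * g')
      = W * g * (h * h') * g' - g * h * (g' * W * g) * h' * g' := by
        simp only [sub_mul, mul_assoc, ← mul_assoc h' h, hh', one_mul, ← mul_assoc g' g, hg']
    _ = W - g * h * W * h' * g' := by rw [hh, hWg, mul_one, mul_assoc, hg, mul_one]

end Ring

namespace NormedSpace

variable {A : Type*} [NormedRing A] [NormedAlgebra ℚ A] [CompleteSpace A]

theorem exp_mul_exp_neg (x : A) : exp x * exp (-x) = 1 := by
  rw [← exp_add_of_commute (Commute.refl x).neg_right, add_neg_cancel, exp_zero]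

theorem exp_neg_mul_exp (x : A) : exp (-x) * exp x = 1 := by
  simpa using exp_mul_exp_neg (-x)

end NormedSpace

section ConjugationPath

variable {A : Type*} [NormedRing A] [NormedAlgebra ℝ A] [CompleteSpace A]

theorem hasDerivAt_exp_smul_mul_mul_exp_neg_smul (W C : A) (t : ℝ) :
    HasDerivAt (fun s : ℝ => exp (s • W) * C * exp (-(s • W)))
      (W * (exp (t • W) * C * exp (-(t • W))) - exp (t • W) * C * exp (-(t • W)) * W) t := by
  have h := ((hasDerivAt_exp_smul_const' W t).mul_const C).mul (hasDerivAt_exp_smul_const (-W) t)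
  simp only [smul_neg] at h
  exact h.congr_deriv (by noncomm_ring)

end ConjugationPath

section

variable {𝕜 A : Type*} [RCLike 𝕜] [NormedRing A] [NormedAlgebra 𝕜 A]

namespace ContinuousLinearMap

variable (𝕜) in
noncomputable def mulLeftRingHom : A →+* (A →L[𝕜] A) :=
  { NonUnitalAlgHom.Lmul 𝕜 A with map_one' := ext fun _ => one_mul _ }

variable (𝕜) in
noncomputable def mulRightRingHom : Aᵐᵒᵖ →+* (A →L[𝕜] A) where
  toFun a := (mul 𝕜 A).flip a.unop
  map_one' := ext fun _ => mul_one _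
  map_mul' _ _ := ext fun _ => (mul_assoc _ _ _).symm
  map_zero' := ext fun _ => mul_zero _
  map_add' _ _ := ext fun _ => mul_add _ _ _

variable [CompleteSpace A]

theorem exp_mul (x : A) : exp (mul 𝕜 A x) = mul 𝕜 A (exp x) := by
  let +nondep : NormedAlgebra ℚ A := .restrictScalars ℚ 𝕜 A
  let +nondep : NormedAlgebra ℚ (A →L[𝕜] A) := .restrictScalars ℚ 𝕜 _
  exact (map_exp (mulLeftRingHom 𝕜) (mul 𝕜 A).continuous x).symm

theorem exp_mul_flip (x : A) : exp ((mul 𝕜 A).flip x) = (mul 𝕜 A).flip (exp x) := by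
  let +nondep : NormedAlgebra ℚ A := .restrictScalars ℚ 𝕜 A
  let +nondep : NormedAlgebra ℚ (A →L[𝕜] A) := .restrictScalars ℚ 𝕜 _
  have := map_exp (mulRightRingHom 𝕜) ((mul 𝕜 A).flip.continuous.comp MulOpposite.continuous_unop)
    (.op x)
  rw [exp_op] at this
  exact this.symm

end ContinuousLinearMap

variable (𝕜) in
noncomputable def adCLM (T : A) : A →L[𝕜] A := mul 𝕜 A T - (mul 𝕜 A).flip T

@[simp]
theorem adCLM_apply (T x : A) : adCLM 𝕜 T x = T * x - x * T := rfl

variable (𝕜) in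
noncomputable def bakerTerm (T W : A) (n : ℕ) : A := ((n + 1)! : 𝕜)⁻¹ • (adCLM 𝕜 T ^ (n + 1)) W

theorem bakerTerm_eq (T W : A) (n : ℕ) :
    bakerTerm 𝕜 T W n = ((n + 1)! : 𝕜)⁻¹ • (adCLM 𝕜 T ^ n) (T * W - W * T) := by
  rw [bakerTerm, pow_succ, mul_apply_eq_comp, adCLM_apply]

section Complete

variable [CompleteSpace A]

theorem hasSum_exp_mul_mul_exp_neg (T W : A) :
    HasSum (fun n : ℕ => (n ! : 𝕜)⁻¹ • (adCLM 𝕜 T ^ n) W) (exp T * W * exp (-T)) := by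
  let +nondep : NormedAlgebra ℚ (A →L[𝕜] A) := .restrictScalars ℚ 𝕜 _
  have hcomm : Commute (mul 𝕜 A T) (-(mul 𝕜 A).flip T) :=
    .neg_right <| ext fun x => (mul_assoc T x T).symm
  have hexp : exp (adCLM 𝕜 T) = mul 𝕜 A (exp T) * (mul 𝕜 A).flip (exp (-T)) := by
    rw [adCLM, sub_eq_add_neg, exp_add_of_commute hcomm, ← map_neg, exp_mul, exp_mul_flip]
  simpa [hexp, mul_assoc] using (exp_series_hasSum_exp' (𝕂 := 𝕜) (adCLM 𝕜 T)).mapL (apply 𝕜 A W)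

theorem hasSum_bakerTerm (T W : A) :
    HasSum (bakerTerm 𝕜 T W) (exp T * W * exp (-T) - W) := by
  have h := (hasSum_nat_add_iff' 1).mpr (hasSum_exp_mul_mul_exp_neg (𝕜 := 𝕜) T W)
  rwa [sum_range_one, Nat.factorial_zero, Nat.cast_one, inv_one, one_smul, pow_zero,
    one_apply_eq_self] at h

end Complete

structure IsRelativeIdeal (I : Submodule 𝕜 A) (nJ : A → ℝ) : Prop where
  mul_mem_left : ∀ a : A, ∀ x ∈ I, a * x ∈ I
  mul_mem_right : ∀ a : A, ∀ x ∈ I, x * a ∈ I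
  add_le : ∀ x ∈ I, ∀ y ∈ I, nJ (x + y) ≤ nJ x + nJ y
  smul_eq : ∀ (c : 𝕜), ∀ x ∈ I, nJ (c • x) = ‖c‖ * nJ x
  norm_le : ∀ x ∈ I, ‖x‖ ≤ nJ x
  mul_mul_le : ∀ a b : A, ∀ x ∈ I, nJ (a * x * b) ≤ ‖a‖ * nJ x * ‖b‖
  complete : ∀ u : ℕ → A, (∀ n, u n ∈ I) →
    (∀ ε > (0 : ℝ), ∃ N, ∀ m ≥ N, ∀ n ≥ N, nJ (u m - u n) < ε) →
    ∃ x ∈ I, ∀ ε > (0 : ℝ), ∃ N, ∀ n ≥ N, nJ (u n - x) < ε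

structure IsHypertrace (I : Submodule 𝕜 A) (nJ : A → ℝ) (τ : A → 𝕜) : Prop where
  map_add : ∀ x ∈ I, ∀ y ∈ I, τ (x + y) = τ x + τ y
  map_smul : ∀ (c : 𝕜), ∀ x ∈ I, τ (c • x) = c * τ x
  bounded : ∃ C : ℝ, ∀ x ∈ I, ‖τ x‖ ≤ C * nJ x
  trace : ∀ x ∈ I, ∀ a : A, τ (x * a) = τ (a * x)

theorem tendsto_map_of_bounded_additiveOn {E : Type*} [SeminormedAddCommGroup E]
    {I : Submodule 𝕜 A} {nJ : A → ℝ} {g : A → E}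
    (hg_add : ∀ x ∈ I, ∀ y ∈ I, g (x + y) = g x + g y) {C : ℝ}
    (hg_le : ∀ x ∈ I, ‖g x‖ ≤ C * nJ x) {u : ℕ → A} {x : A} (hu : ∀ n, u n ∈ I) (hx : x ∈ I)
    (h : Tendsto (fun n => nJ (u n - x)) atTop (𝓝 0)) :
    Tendsto (fun n => g (u n)) atTop (𝓝 (g x)) := by
  have hsub : ∀ n, g (u n) - g x = g (u n - x) := fun n => by
    rw [sub_eq_iff_eq_add, ← hg_add _ (I.sub_mem (hu n) hx) _ hx, sub_add_cancel]
  rw [tendsto_iff_norm_sub_tendsto_zero]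
  refine squeeze_zero (fun _ => norm_nonneg _) (fun n => ?_) (by simpa using h.const_mul C)
  rw [hsub]
  exact hg_le _ (I.sub_mem (hu n) hx)

namespace IsRelativeIdeal

variable {I : Submodule 𝕜 A} {nJ : A → ℝ}

theorem nonneg (hI : IsRelativeIdeal I nJ) {x : A} (hx : x ∈ I) : 0 ≤ nJ x :=
  (norm_nonneg x).trans (hI.norm_le x hx)

theorem map_zero (hI : IsRelativeIdeal I nJ) : nJ 0 = 0 := by
  simpa using hI.smul_eq 0 0 I.zero_mem

theorem map_neg (hI : IsRelativeIdeal I nJ) {x : A} (hx : x ∈ I) : nJ (-x) = nJ x := by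
  simpa using hI.smul_eq (-1) x hx

theorem exists_tendsto_of_summable_bound (hI : IsRelativeIdeal I nJ) {f : ℕ → A}
    (hf : ∀ n, f n ∈ I) {b : ℕ → ℝ} (hfb : ∀ n, nJ (f n) ≤ b n) (hb : Summable b) :
    ∃ x ∈ I, Tendsto (fun N => nJ (∑ n ∈ range N, f n - x)) atTop (𝓝 0) := by
  have hmem : ∀ N, ∑ n ∈ range N, f n ∈ I := fun N => I.sum_mem fun n _ => hf n
  have hdist : ∀ m n, nJ (∑ k ∈ range m, f k - ∑ k ∈ range n, f k) ≤
      dist (∑ k ∈ range m, b k) (∑ k ∈ range n, b k) := by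
    intro m n
    wlog hnm : n ≤ m generalizing m n
    · rw [← neg_sub, hI.map_neg (I.sub_mem (hmem n) (hmem m)), dist_comm]
      exact this n m (by omega)
    rw [Real.dist_eq, ← sum_Ico_eq_sub _ hnm, ← sum_Ico_eq_sub _ hnm]
    calc nJ (∑ k ∈ Ico n m, f k) ≤ ∑ k ∈ Ico n m, nJ (f k) :=
          le_sum_of_subadditive_on_pred nJ (· ∈ I) hI.map_zero.le
            (fun x y hx hy => hI.add_le x hx y hy) (fun _ _ => I.add_mem) f fun k _ => hf k
      _ ≤ ∑ k ∈ Ico n m, b k := sum_le_sum fun k _ => hfb k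
      _ ≤ |∑ k ∈ Ico n m, b k| := le_abs_self _
  obtain ⟨x, hx, hlim⟩ := hI.complete _ hmem fun ε hε => by
    obtain ⟨N, hN⟩ := Metric.cauchySeq_iff.mp hb.hasSum.tendsto_sum_nat.cauchySeq ε hε
    exact ⟨N, fun m hm n hn => (hdist m n).trans_lt (hN m hm n hn)⟩
  refine ⟨x, hx, Metric.tendsto_atTop.mpr fun ε hε => ?_⟩
  obtain ⟨N, hN⟩ := hlim ε hε
  refine ⟨N, fun n hn => ?_⟩
  rw [Real.dist_eq, sub_zero, abs_of_nonneg (hI.nonneg (I.sub_mem (hmem n) hx))]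
  exact hN n hn

theorem adCLM_pow_mem (hI : IsRelativeIdeal I nJ) (T : A) {x : A} (hx : x ∈ I) (n : ℕ) :
    (adCLM 𝕜 T ^ n) x ∈ I := by
  induction n with
  | zero => exact hx
  | succ n ih =>
    rw [pow_succ', mul_apply_eq_comp, adCLM_apply]
    exact I.sub_mem (hI.mul_mem_left T _ ih) (hI.mul_mem_right T _ ih)

theorem adCLM_pow_le [NormOneClass A] (hI : IsRelativeIdeal I nJ) (T : A) {x : A} (hx : x ∈ I)
    (n : ℕ) : nJ ((adCLM 𝕜 T ^ n) x) ≤ (2 * ‖T‖) ^ n * nJ x := by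
  induction n with
  | zero => simp
  | succ n ih =>
    set y := (adCLM 𝕜 T ^ n) x
    have hy : y ∈ I := hI.adCLM_pow_mem T hx n
    have hleft : nJ (T * y) ≤ ‖T‖ * nJ y := by simpa using hI.mul_mul_le T 1 y hy
    have hright : nJ (y * T) ≤ nJ y * ‖T‖ := by simpa using hI.mul_mul_le 1 T y hy
    rw [pow_succ', mul_apply_eq_comp, adCLM_apply, sub_eq_add_neg]
    calc nJ (T * y + -(y * T)) ≤ nJ (T * y) + nJ (-(y * T)) :=
          hI.add_le _ (hI.mul_mem_left T y hy) _ (I.neg_mem (hI.mul_mem_right T y hy))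
      _ ≤ 2 * ‖T‖ * nJ y := by
          rw [hI.map_neg (hI.mul_mem_right T y hy)]; linarith
      _ ≤ 2 * ‖T‖ * ((2 * ‖T‖) ^ n * nJ x) := by gcongr
      _ = (2 * ‖T‖) ^ (n + 1) * nJ x := by ring

end IsRelativeIdeal

namespace IsHypertrace

variable {I : Submodule 𝕜 A} {nJ : A → ℝ} {τ : A → 𝕜}

theorem map_sum (hτ : IsHypertrace I nJ τ) {ι : Type*} (s : Finset ι) {f : ι → A}
    (hf : ∀ i ∈ s, f i ∈ I) : τ (∑ i ∈ s, f i) = ∑ i ∈ s, τ (f i) := by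
  classical
  induction s using Finset.induction_on with
  | empty => simpa using hτ.map_smul 0 0 I.zero_mem
  | insert i s hi ih =>
    have hfs : ∀ j ∈ s, f j ∈ I := fun j hj => hf j (mem_insert_of_mem hj)
    rw [sum_insert hi, sum_insert hi, hτ.map_add _ (hf i (mem_insert_self i s)) _ (I.sum_mem hfs),
      ih hfs]

theorem map_neg (hτ : IsHypertrace I nJ τ) {x : A} (hx : x ∈ I) : τ (-x) = -τ x := by
  simpa using hτ.map_smul (-1) x hx

theorem map_adCLM (hτ : IsHypertrace I nJ τ) (hI : IsRelativeIdeal I nJ) (T : A) {x : A}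
    (hx : x ∈ I) : τ (adCLM 𝕜 T x) = 0 := by
  rw [adCLM_apply, sub_eq_add_neg, hτ.map_add _ (hI.mul_mem_left T x hx) _
    (I.neg_mem (hI.mul_mem_right T x hx)), hτ.map_neg (hI.mul_mem_right T x hx), hτ.trace x hx T,
    add_neg_cancel]

theorem map_conj (hτ : IsHypertrace I nJ τ) (hI : IsRelativeIdeal I nJ) {g g' x : A}
    (hg : g' * g = 1) (hx : x ∈ I) : τ (g * x * g') = τ x := by
  rw [mul_assoc, ← hτ.trace _ (hI.mul_mem_right g' x hx), mul_assoc, hg, mul_one]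

end IsHypertrace

section BakerIdeal

variable {I : Submodule 𝕜 A} {nJ : A → ℝ} {τ : A → 𝕜} {T W : A}

theorem IsRelativeIdeal.bakerTerm_mem (hI : IsRelativeIdeal I nJ) (hTW : T * W - W * T ∈ I)
    (n : ℕ) : bakerTerm 𝕜 T W n ∈ I := by
  rw [bakerTerm_eq]
  exact I.smul_mem _ (hI.adCLM_pow_mem T hTW n)

theorem IsRelativeIdeal.bakerTerm_le [NormOneClass A] (hI : IsRelativeIdeal I nJ)
    (hTW : T * W - W * T ∈ I) (n : ℕ) :
    nJ (bakerTerm 𝕜 T W n) ≤ (2 * ‖T‖) ^ n / n ! * nJ (T * W - W * T) := by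
  rw [bakerTerm_eq, hI.smul_eq _ _ (hI.adCLM_pow_mem T hTW n), norm_inv, RCLike.norm_natCast]
  have := hI.nonneg hTW
  calc ((n + 1)! : ℝ)⁻¹ * nJ ((adCLM 𝕜 T ^ n) (T * W - W * T))
      ≤ (n ! : ℝ)⁻¹ * ((2 * ‖T‖) ^ n * nJ (T * W - W * T)) := by
        gcongr
        · exact hI.nonneg (hI.adCLM_pow_mem T hTW n)
        · exact n.le_succ
        · exact hI.adCLM_pow_le T hTW n
    _ = (2 * ‖T‖) ^ n / n ! * nJ (T * W - W * T) := by ring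

theorem IsHypertrace.hasSum_map_bakerTerm (hτ : IsHypertrace I nJ τ) (hI : IsRelativeIdeal I nJ)
    (hTW : T * W - W * T ∈ I) :
    HasSum (fun n => τ (bakerTerm 𝕜 T W n)) (τ (T * W - W * T)) := by
  convert hasSum_single 0 fun n hn => ?_
  · simp [bakerTerm_eq]
  · obtain ⟨m, rfl⟩ := Nat.exists_eq_succ_of_ne_zero hn
    rw [bakerTerm_eq, hτ.map_smul _ _ (hI.adCLM_pow_mem T hTW _), pow_succ', mul_apply_eq_comp,
      hτ.map_adCLM hI T (hI.adCLM_pow_mem T hTW m), mul_zero]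

theorem IsHypertrace.exp_mul_mul_exp_neg_sub [CompleteSpace A] [NormOneClass A]
    (hτ : IsHypertrace I nJ τ) (hI : IsRelativeIdeal I nJ) (hTW : T * W - W * T ∈ I) :
    exp T * W * exp (-T) - W ∈ I ∧ τ (exp T * W * exp (-T) - W) = τ (T * W - W * T) := by
  have hmem : ∀ N, ∑ n ∈ range N, bakerTerm 𝕜 T W n ∈ I :=
    fun N => I.sum_mem fun n _ => hI.bakerTerm_mem hTW n
  obtain ⟨x, hx, hlim⟩ := hI.exists_tendsto_of_summable_bound (hI.bakerTerm_mem hTW)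
    (hI.bakerTerm_le hTW) ((Real.summable_pow_div_factorial _).mul_right _)
  have hx_eq : x = exp T * W * exp (-T) - W := by
    refine tendsto_nhds_unique ?_ (hasSum_bakerTerm (𝕜 := 𝕜) T W).tendsto_sum_nat
    exact tendsto_map_of_bounded_additiveOn (g := id) (fun _ _ _ _ => rfl)
      (fun z hz => (one_mul (nJ z)).symm ▸ hI.norm_le z hz) hmem hx hlim
  obtain ⟨C, hC⟩ := hτ.bounded
  refine hx_eq ▸ ⟨hx, tendsto_nhds_unique
    (tendsto_map_of_bounded_additiveOn hτ.map_add hC hmem hx hlim) ?_⟩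
  simpa only [hτ.map_sum _ fun n _ => hI.bakerTerm_mem hTW n]
    using (hτ.hasSum_map_bakerTerm hI hTW).tendsto_sum_nat

end BakerIdeal

end

open NormedSpace in
theorem hypertrace_integral_logDeriv_general {A : Type*} [NormedRing A] [NormedAlgebra ℂ A]
    [CompleteSpace A] [NormOneClass A]
    (J : Set A) (nJ : A → ℝ) (τ : A → ℂ)
    (hJ_zero : (0 : A) ∈ J)
    (hJ_add : ∀ x ∈ J, ∀ y ∈ J, x + y ∈ J)
    (hJ_smul : ∀ (c : ℂ), ∀ x ∈ J, c • x ∈ J)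
    (hJ_mul_left : ∀ a : A, ∀ x ∈ J, a * x ∈ J)
    (hJ_mul_right : ∀ a : A, ∀ x ∈ J, x * a ∈ J)
    (hnJ_add : ∀ x ∈ J, ∀ y ∈ J, nJ (x + y) ≤ nJ x + nJ y)
    (hnJ_smul : ∀ (c : ℂ), ∀ x ∈ J, nJ (c • x) = ‖c‖ * nJ x)
    (hnJ_complete : ∀ u : ℕ → A, (∀ n, u n ∈ J) →
      (∀ ε > (0 : ℝ), ∃ N, ∀ m ≥ N, ∀ n ≥ N, nJ (u m - u n) < ε) →
      ∃ x ∈ J, ∀ ε > (0 : ℝ), ∃ N, ∀ n ≥ N, nJ (u n - x) < ε)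
    (h_norm_le : ∀ x ∈ J, ‖x‖ ≤ nJ x)
    (h_abc : ∀ a b : A, ∀ x ∈ J, nJ (a * x * b) ≤ ‖a‖ * nJ x * ‖b‖)
    (hτ_add : ∀ x ∈ J, ∀ y ∈ J, τ (x + y) = τ x + τ y)
    (hτ_smul : ∀ (c : ℂ), ∀ x ∈ J, τ (c • x) = c * τ x)
    (hτ_cont : ∃ C : ℝ, ∀ x ∈ J, ‖τ x‖ ≤ C * nJ x)
    (hτ_trace : ∀ x ∈ J, ∀ a : A, τ (x * a) = τ (a * x))
    (T W : A) (hTW : T * W - W * T ∈ J)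
    (β : ℝ → A)
    (hβ : ∀ s : ℝ, β s = exp ((s : ℂ) • W) * exp T * exp (-((s : ℂ) • W)) * exp (-T)) :
    (∀ t ∈ Set.Icc (0 : ℝ) 1,
      W - exp ((t : ℂ) • W) * exp T * W * exp (-T) * exp (-((t : ℂ) • W)) ∈ J ∧
      ∃ D : A, HasDerivAt β D t ∧
        D * (exp T * exp ((t : ℂ) • W) * exp (-T) * exp (-((t : ℂ) • W))) =
          W - exp ((t : ℂ) • W) * exp T * W * exp (-T) * exp (-((t : ℂ) • W))) ∧
    -(∫ t in (0 : ℝ)..1,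
        τ (W - exp ((t : ℂ) • W) * exp T * W * exp (-T) * exp (-((t : ℂ) • W)))) =
      τ (T * W - W * T) := by
  let +nondep : NormedAlgebra ℚ A := .restrictScalars ℚ ℂ A
  let I : Submodule ℂ A :=
    { carrier := J
      add_mem' := fun hx hy => hJ_add _ hx _ hy
      zero_mem' := hJ_zero
      smul_mem' := hJ_smul }
  have hI : IsRelativeIdeal I nJ :=
    ⟨hJ_mul_left, hJ_mul_right, hnJ_add, hnJ_smul, h_norm_le, h_abc, hnJ_complete⟩
  have hτ : IsHypertrace I nJ τ := ⟨hτ_add, hτ_smul, hτ_cont, hτ_trace⟩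
  obtain ⟨hy, hτy⟩ := hτ.exp_mul_mul_exp_neg_sub hI hTW
  simp only [Complex.coe_smul] at hβ ⊢
  have hconj : ∀ t : ℝ, W - exp (t • W) * exp T * W * exp (-T) * exp (-(t • W)) =
      -(exp (t • W) * (exp T * W * exp (-T) - W) * exp (-(t • W))) := fun t =>
    sub_conj_conj_eq_neg_conj (exp_mul_exp_neg _) ((Commute.refl W).smul_right t).exp_right
  refine ⟨fun t _ => ⟨?_, ?_⟩, ?_⟩
  · rw [hconj]
    exact I.neg_mem (hI.mul_mem_right _ _ (hI.mul_mem_left _ _ hy))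
  · refine ⟨_, funext hβ ▸
      (hasDerivAt_exp_smul_mul_mul_exp_neg_smul W (exp T) t).mul_const (exp (-T)), ?_⟩
    exact commutator_conj_mul_conj_inv (exp_mul_exp_neg _) (exp_neg_mul_exp _)
      (exp_mul_exp_neg _) (exp_neg_mul_exp _) ((Commute.refl W).smul_right t).exp_right
  · have hconst : ∀ t : ℝ, τ (W - exp (t • W) * exp T * W * exp (-T) * exp (-(t • W))) =
        -τ (T * W - W * T) := fun t => by
      rw [hconj, hτ.map_neg (hI.mul_mem_right _ _ (hI.mul_mem_left _ _ hy)),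
        hτ.map_conj hI (exp_neg_mul_exp _) hy, hτy]
    simp [hconst]

open NormedSpace in
/-- Let `(A, J)` be a relative pair of Banach algebras with `‖1‖ = 1` and `τ` a hypertrace on `J`.
For `T, W ∈ A` with `TW - WT ∈ J` and `β(t) = exp(tW) exp(T) exp(-tW) exp(-T)`, the element
`W - exp(tW) exp(T) W exp(-T) exp(-tW)`, which equals `β'(t) β(t)⁻¹`, lies in `J` for every
`t ∈ [0,1]`, and `-∫_0^1 τ(β'(t) β(t)⁻¹) dt = τ (TW - WT)`. -/
theorem hypertrace_integral_logDeriv {A : Type*} [NormedRing A] [NormedAlgebra ℂ A]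
    [CompleteSpace A] [NormOneClass A]
    (J : Set A) (nJ : A → ℝ) (τ : A → ℂ)
    (hJ_zero : (0 : A) ∈ J)
    (hJ_add : ∀ x ∈ J, ∀ y ∈ J, x + y ∈ J)
    (hJ_neg : ∀ x ∈ J, -x ∈ J)
    (hJ_smul : ∀ (c : ℂ), ∀ x ∈ J, c • x ∈ J)
    (hJ_mul_left : ∀ a : A, ∀ x ∈ J, a * x ∈ J)
    (hJ_mul_right : ∀ a : A, ∀ x ∈ J, x * a ∈ J)
    (hnJ_add : ∀ x ∈ J, ∀ y ∈ J, nJ (x + y) ≤ nJ x + nJ y)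
    (hnJ_smul : ∀ (c : ℂ), ∀ x ∈ J, nJ (c • x) = ‖c‖ * nJ x)
    (hnJ_def : ∀ x ∈ J, (nJ x = 0 ↔ x = 0))
    (hnJ_mul : ∀ x ∈ J, ∀ y ∈ J, nJ (x * y) ≤ nJ x * nJ y)
    (hnJ_complete : ∀ u : ℕ → A, (∀ n, u n ∈ J) →
      (∀ ε > (0 : ℝ), ∃ N, ∀ m ≥ N, ∀ n ≥ N, nJ (u m - u n) < ε) →
      ∃ x ∈ J, ∀ ε > (0 : ℝ), ∃ N, ∀ n ≥ N, nJ (u n - x) < ε)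
    (h_norm_le : ∀ x ∈ J, ‖x‖ ≤ nJ x)
    (h_abc : ∀ a b : A, ∀ x ∈ J, nJ (a * x * b) ≤ ‖a‖ * nJ x * ‖b‖)
    (hτ_add : ∀ x ∈ J, ∀ y ∈ J, τ (x + y) = τ x + τ y)
    (hτ_smul : ∀ (c : ℂ), ∀ x ∈ J, τ (c • x) = c * τ x)
    (hτ_cont : ∃ C : ℝ, ∀ x ∈ J, ‖τ x‖ ≤ C * nJ x)
    (hτ_trace : ∀ x ∈ J, ∀ a : A, τ (x * a) = τ (a * x))
    (T W : A) (hTW : T * W - W * T ∈ J)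
    (β : ℝ → A)
    (hβ : ∀ s : ℝ, β s = exp ((s : ℂ) • W) * exp T * exp (-((s : ℂ) • W)) * exp (-T)) :
    (∀ t ∈ Set.Icc (0 : ℝ) 1,
      W - exp ((t : ℂ) • W) * exp T * W * exp (-T) * exp (-((t : ℂ) • W)) ∈ J ∧
      ∃ D : A, HasDerivAt β D t ∧
        D * (exp T * exp ((t : ℂ) • W) * exp (-T) * exp (-((t : ℂ) • W))) =
          W - exp ((t : ℂ) • W) * exp T * W * exp (-T) * exp (-((t : ℂ) • W))) ∧
    -(∫ t in (0 : ℝ)..1,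
        τ (W - exp ((t : ℂ) • W) * exp T * W * exp (-T) * exp (-((t : ℂ) • W)))) =
      τ (T * W - W * T) :=
  hypertrace_integral_logDeriv_general J nJ τ hJ_zero hJ_add hJ_smul hJ_mul_left hJ_mul_right
    hnJ_add hnJ_smul hnJ_complete h_norm_le h_abc hτ_add hτ_smul hτ_cont hτ_trace T W hTW β hβ
end

section
/- Let f : ℝ → ℂ be differentiable with |f(t)| ≤ M and |f′(t)| ≤ M′ for all t ∈ ℝ, where M, M′ ≥ 0. Then for every x ∈ ℝ, ∫_ℝ |f(x+t) − f(x)|² / (π·t)² dt ≤ (M + M′)². -/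
/-!
By the mean value theorem `‖f (x + t) - f x‖ ≤ M' |t|`, and trivially `‖f (x + t) - f x‖ ≤ 2M`,
so the integrand is dominated by `M'² / π²` on `[-1, 1]` and by `4M² / (π t)²` outside. These
pieces integrate to `2M'² / π²` and `8M² / π²`, and `8M² + 2M'² ≤ 9 (M + M')² ≤ π² (M + M')²`.
-/

open MeasureTheory Real Set

theorem integrable_comp_abs {E : Type*} [NormedAddCommGroup E] {f : ℝ → E}
    (hf : IntegrableOn f (Ioi 0)) : Integrable fun x => f |x| := by
  have hIoi : IntegrableOn (fun x => f |x|) (Ioi 0) :=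
    hf.congr_fun (fun x hx => by rw [abs_of_pos (mem_Ioi.mp hx)]) measurableSet_Ioi
  have hIic : IntegrableOn (fun x => f |x|) (Iic 0) := by
    have hneg : MeasurableEmbedding fun x : ℝ => -x := (Homeomorph.neg ℝ).measurableEmbedding
    rw [← Measure.map_neg_eq_self (volume : Measure ℝ), hneg.integrableOn_map_iff]
    simp_rw [Function.comp_def, abs_neg, neg_preimage, neg_Iic, neg_zero]
    exact (integrableOn_Ici_iff_integrableOn_Ioi (by simp)).mpr hIoi
  simpa only [Iic_union_Ioi, integrableOn_univ] using hIic.union hIoi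

noncomputable def plateauInvSq (a b s : ℝ) : ℝ := if s ≤ 1 then a else b / s ^ 2

section plateauInvSq

variable (a b : ℝ)

theorem plateauInvSq_eqOn_Ioc : EqOn (plateauInvSq a b) (fun _ => a) (Ioc 0 1) :=
  fun _ hs => if_pos hs.2

theorem plateauInvSq_eqOn_Ioi : EqOn (plateauInvSq a b) (fun s => b * s ^ (-2 : ℝ)) (Ioi 1) := by
  intro s hs
  change plateauInvSq a b s = b * s ^ (-2 : ℝ)
  rw [plateauInvSq, if_neg (not_le.mpr hs.out), rpow_neg (zero_le_one.trans hs.out.le),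
    rpow_two, div_eq_mul_inv]

theorem integrableOn_Ioi_plateauInvSq : IntegrableOn (plateauInvSq a b) (Ioi 0) := by
  have hIoc : IntegrableOn (plateauInvSq a b) (Ioc 0 1) :=
    (integrableOn_const (by simp) (by simp)).congr_fun (plateauInvSq_eqOn_Ioc a b).symm
      measurableSet_Ioc
  have hIoi : IntegrableOn (plateauInvSq a b) (Ioi 1) :=
    IntegrableOn.congr_fun ((integrableOn_Ioi_rpow_of_lt (by norm_num) one_pos).const_mul b)
      (plateauInvSq_eqOn_Ioi a b).symm measurableSet_Ioi
  simpa only [Ioc_union_Ioi_eq_Ioi zero_le_one] using hIoc.union hIoi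

theorem setIntegral_Ioi_plateauInvSq : ∫ s in Ioi 0, plateauInvSq a b s = a + b := by
  have hIoc : ∫ s in Ioc 0 1, plateauInvSq a b s = a := by
    rw [setIntegral_congr_fun measurableSet_Ioc (plateauInvSq_eqOn_Ioc a b)]
    simp
  have hIoi : ∫ s in Ioi 1, plateauInvSq a b s = b := by
    rw [setIntegral_congr_fun measurableSet_Ioi (plateauInvSq_eqOn_Ioi a b), integral_const_mul,
      integral_Ioi_rpow_of_lt (by norm_num) one_pos]
    norm_num
  have hint := integrableOn_Ioi_plateauInvSq a b
  rw [← Ioc_union_Ioi_eq_Ioi zero_le_one,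
    setIntegral_union (Ioc_disjoint_Ioi le_rfl) measurableSet_Ioi
      (hint.mono_set Ioc_subset_Ioi_self) (hint.mono_set (Ioi_subset_Ioi zero_le_one)),
    hIoc, hIoi]

end plateauInvSq

theorem norm_sub_sq_div_sq_le_plateauInvSq {E : Type*} [NormedAddCommGroup E] [NormedSpace ℝ E]
    {f : ℝ → E} (hf : Differentiable ℝ f) {M M' : ℝ} (hbound : ∀ t, ‖f t‖ ≤ M)
    (hbound' : ∀ t, ‖deriv f t‖ ≤ M') (x t : ℝ) :
    ‖f (x + t) - f x‖ ^ 2 / t ^ 2 ≤ plateauInvSq (M' ^ 2) ((2 * M) ^ 2) |t| := by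
  rcases eq_or_ne t 0 with rfl | ht
  · simp [plateauInvSq, sq_nonneg]
  have ht2 : 0 < t ^ 2 := by positivity
  unfold plateauInvSq
  split_ifs with h1
  · have hlip : ‖f (x + t) - f x‖ ≤ M' * |t| := by
      simpa using Convex.norm_image_sub_le_of_norm_deriv_le (fun y _ => hf y) (fun y _ => hbound' y)
        convex_univ (mem_univ x) (mem_univ (x + t))
    rw [div_le_iff₀ ht2, ← sq_abs t, ← mul_pow]
    gcongr
  · have hdiff : ‖f (x + t) - f x‖ ≤ 2 * M :=
      (norm_sub_le _ _).trans (by linarith [hbound (x + t), hbound x])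
    rw [sq_abs]
    gcongr

theorem kernel_l2_bound_general (f : ℝ → ℂ) (hf : Differentiable ℝ f) (M M' : ℝ)
    (hboundf : ∀ t : ℝ, ‖f t‖ ≤ M) (hboundf' : ∀ t : ℝ, ‖deriv f t‖ ≤ M')
    (x : ℝ) :
    ∫ t : ℝ, ‖f (x + t) - f x‖ ^ 2 / (π * t) ^ 2 ≤ (M + M') ^ 2 := by
  have hM : 0 ≤ M := (norm_nonneg _).trans (hboundf 0)
  have hM' : 0 ≤ M' := (norm_nonneg _).trans (hboundf' 0)
  set g := plateauInvSq (M' ^ 2) ((2 * M) ^ 2)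
  have hdom : ∀ t, ‖f (x + t) - f x‖ ^ 2 / (π * t) ^ 2 ≤ g |t| / π ^ 2 := fun t => by
    rw [mul_pow, mul_comm, ← div_div]
    gcongr
    exact norm_sub_sq_div_sq_le_plateauInvSq hf hboundf hboundf' x t
  calc ∫ t, ‖f (x + t) - f x‖ ^ 2 / (π * t) ^ 2 ≤ ∫ t, g |t| / π ^ 2 :=
        integral_mono_of_nonneg (.of_forall fun _ => by positivity)
          ((integrable_comp_abs (integrableOn_Ioi_plateauInvSq _ _)).div_const _) (.of_forall hdom)
    _ = 2 * (M' ^ 2 + (2 * M) ^ 2) / π ^ 2 := by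
        rw [integral_div, integral_comp_abs, setIntegral_Ioi_plateauInvSq]
    _ ≤ (M + M') ^ 2 := by
        rw [div_le_iff₀ (by positivity)]
        have hπ : 9 ≤ π ^ 2 := by nlinarith [pi_gt_three]
        nlinarith [mul_nonneg hM hM', mul_le_mul_of_nonneg_left hπ (sq_nonneg (M + M'))]

/-- If `f : ℝ → ℂ` is differentiable with `|f| ≤ M` and `|f'| ≤ M'`, then for every `x`,
`∫_ℝ |f(x+t) - f(x)|² / (π t)² dt ≤ (M + M')²`. -/
theorem kernel_l2_bound (f : ℝ → ℂ) (hf : Differentiable ℝ f) (M M' : ℝ) (hM : 0 ≤ M)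
    (hM' : 0 ≤ M') (hboundf : ∀ t : ℝ, ‖f t‖ ≤ M) (hboundf' : ∀ t : ℝ, ‖deriv f t‖ ≤ M')
    (x : ℝ) :
    ∫ t : ℝ, ‖f (x + t) - f x‖ ^ 2 / (π * t) ^ 2 ≤ (M + M') ^ 2 :=
  kernel_l2_bound_general f hf M M' hboundf hboundf' x
end

section
/- Let (X, μ) be a probability measure space and let α : ℝ × X → X be a jointly measurable action of (ℝ, +) on X (α(0,x) = x and α(s+t, x) = α(s, α(t,x))) such that each map x ↦ α(t,x) preserves μ. Let φ : X → ℂ be measurable with |φ(x)| ≤ M for all x, and suppose there is a measurable function φ′ : X → ℂ with |φ′(x)| ≤ M′ for all x such that for every x ∈ X and t ∈ ℝ, the function s ↦ φ(α(s,x)) has derivative φ′(α(t,x)) at s = t. Define k_φ : X × ℝ → ℂ by k_φ(x,t) = (φ(α(t,x)) − φ(x))/(π·t) for t ≠ 0 and k_φ(x,0) = φ′(x)/π. Then k_φ belongs to L²(X × ℝ, μ ⊗ Lebesgue) and ‖k_φ‖_{L²(X×ℝ)} ≤ M + M′. -/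
open MeasureTheory Real Set
open scoped ENNReal

/-!
The mean value theorem along the flow gives `‖k_φ(x, t)‖ ≤ M'/π`, and the triangle inequality
gives `‖k_φ(x, t)‖ ≤ 2M/(π|t|)`. Using the first bound for `|t| ≤ 1` and the second for `|t| > 1`
yields a majorant depending on `t` alone; as `μ` is a probability measure, its `L²(μ ⊗ Leb)` norm
is its `L²(ℝ)` norm, whose square is `2(M'/π)² + 2(2M/π)² ≤ (M + M')²` because `π² > 8`.
-/

theorem lintegral_comp_abs (f : ℝ → ℝ≥0∞) : ∫⁻ t, f |t| = 2 * ∫⁻ t in Ioi 0, f t := by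
  have hIio : ∫⁻ t in Iio 0, f |t| = ∫⁻ t in Ioi 0, f t := by
    rw [← (Measure.measurePreserving_neg volume).setLIntegral_comp_preimage_emb
      (Homeomorph.neg ℝ).measurableEmbedding, neg_preimage, neg_Iio, neg_zero]
    exact setLIntegral_congr_fun measurableSet_Ioi fun t ht => by
      rw [abs_neg, abs_of_pos ht]
  have hIci : ∫⁻ t in Ici 0, f |t| = ∫⁻ t in Ioi 0, f t := by
    rw [setLIntegral_congr Ioi_ae_eq_Ici.symm]
    exact setLIntegral_congr_fun measurableSet_Ioi fun t ht => by rw [abs_of_pos ht]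
  rw [← lintegral_add_compl _ measurableSet_Ici, compl_Ici, hIio, hIci, two_mul]

theorem eLpNorm_two_sq_eq_lintegral {α : Type*} [MeasurableSpace α] (f : α → ℝ)
    (μ : Measure α) : eLpNorm f 2 μ ^ 2 = ∫⁻ x, ENNReal.ofReal (f x ^ 2) ∂μ := by
  have := eLpNorm_nnreal_pow_eq_lintegral (f := f) (μ := μ) (p := 2) two_ne_zero
  simp only [NNReal.coe_ofNat, ENNReal.coe_ofNat, ENNReal.rpow_ofNat] at this
  rw [this]
  congr! 2 with x
  rw [← ofReal_norm, ← ENNReal.ofReal_pow (norm_nonneg _), norm_eq_abs, sq_abs]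

theorem eLpNorm_prod_le_of_norm_le_comp_snd {X Y E : Type*} [MeasurableSpace X]
    [MeasurableSpace Y] [NormedAddCommGroup E] {μ : Measure X} [IsProbabilityMeasure μ]
    {ν : Measure Y} [SFinite ν] {f : X × Y → E} {g : Y → ℝ} {p : ℝ≥0∞}
    (hg : AEStronglyMeasurable g ν)
    (hfg : ∀ z, ‖f z‖ ≤ g z.2) : eLpNorm f p (μ.prod ν) ≤ eLpNorm g p ν :=
  (eLpNorm_mono_real hfg).trans (eLpNorm_comp_measurePreserving hg measurePreserving_snd).le

/-- `k_φ(x, t) = slopeKernel (fun s ↦ φ (α s x)) (fun s ↦ φ' (α s x)) t`. -/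
noncomputable def slopeKernel (f f' : ℝ → ℂ) (t : ℝ) : ℂ :=
  if t = 0 then f' 0 / (π : ℂ) else (f t - f 0) / ((π : ℂ) * (t : ℂ))

noncomputable def kernelMajorant (M M' t : ℝ) : ℝ :=
  if |t| ≤ 1 then M' / π else 2 * M / (π * |t|)

theorem measurable_kernelMajorant (M M' : ℝ) : Measurable (kernelMajorant M M') :=
  Measurable.ite (measurableSet_le continuous_abs.measurable measurable_const) measurable_const
    (by fun_prop)

theorem kernelMajorant_abs (M M' t : ℝ) : kernelMajorant M M' |t| = kernelMajorant M M' t := by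
  simp only [kernelMajorant, abs_abs]

theorem norm_slopeKernel_le {f f' : ℝ → ℂ} {M M' : ℝ} (hf : ∀ s, HasDerivAt f (f' s) s)
    (hM : ∀ s, ‖f s‖ ≤ M) (hM' : ∀ s, ‖f' s‖ ≤ M') (t : ℝ) :
    ‖slopeKernel f f' t‖ ≤ kernelMajorant M M' t := by
  rcases eq_or_ne t 0 with rfl | ht
  · simpa [slopeKernel, kernelMajorant, abs_of_pos pi_pos] using
      div_le_div_of_nonneg_right (hM' 0) pi_pos.le
  have hnorm : ‖slopeKernel f f' t‖ = ‖f t - f 0‖ / (π * |t|) := by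
    simp [slopeKernel, ht, abs_of_pos pi_pos]
  rw [hnorm, kernelMajorant]
  split_ifs with h1
  · have hlip : ‖f t - f 0‖ ≤ M' * |t| := by
      simpa [Real.norm_eq_abs] using Convex.norm_image_sub_le_of_norm_hasDerivWithin_le
        (fun s _ => (hf s).hasDerivWithinAt) (fun s _ => hM' s) convex_univ
        (mem_univ 0) (mem_univ t)
    calc ‖f t - f 0‖ / (π * |t|) ≤ M' * |t| / (π * |t|) := by gcongr
      _ = M' / π := by field_simp
  · gcongr
    calc ‖f t - f 0‖ ≤ ‖f t‖ + ‖f 0‖ := norm_sub_le _ _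
      _ ≤ 2 * M := by linarith [hM t, hM 0]

theorem setLIntegral_Ioc_kernelMajorant_sq (M M' : ℝ) :
    ∫⁻ t in Ioc 0 1, ENNReal.ofReal (kernelMajorant M M' t ^ 2) =
      ENNReal.ofReal ((M' / π) ^ 2) := by
  rw [setLIntegral_congr_fun measurableSet_Ioc (g := fun _ => ENNReal.ofReal ((M' / π) ^ 2))
    fun t ht => by simp [kernelMajorant, abs_of_pos ht.1, ht.2]]
  simp

theorem setLIntegral_Ioi_one_kernelMajorant_sq (M M' : ℝ) :
    ∫⁻ t in Ioi 1, ENNReal.ofReal (kernelMajorant M M' t ^ 2) =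
      ENNReal.ofReal ((2 * M / π) ^ 2) := by
  have hcongr : EqOn (fun t => ENNReal.ofReal (kernelMajorant M M' t ^ 2))
      (fun t => ENNReal.ofReal ((2 * M / π) ^ 2 * t ^ (-2 : ℝ))) (Ioi 1) := by
    intro t (ht : 1 < t)
    have ht0 : 0 < t := one_pos.trans ht
    simp only [kernelMajorant, abs_of_pos ht0, not_le.2 ht, if_false, rpow_neg ht0.le,
      rpow_ofNat]
    congr 1
    field_simp
  rw [setLIntegral_congr_fun measurableSet_Ioi hcongr, ← ofReal_integral_eq_lintegral_ofReal,
    integral_const_mul, integral_Ioi_rpow_of_lt (by norm_num) one_pos]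
  · norm_num
  · exact (integrableOn_Ioi_rpow_of_lt (by norm_num) one_pos).const_mul _
  · exact (ae_restrict_iff' measurableSet_Ioi).2 (.of_forall fun t (ht : 1 < t) =>
      by positivity)

theorem lintegral_kernelMajorant_sq (M M' : ℝ) :
    ∫⁻ t, ENNReal.ofReal (kernelMajorant M M' t ^ 2) =
      ENNReal.ofReal (2 * ((M' / π) ^ 2 + (2 * M / π) ^ 2)) := by
  have heven : ∫⁻ t, ENNReal.ofReal (kernelMajorant M M' t ^ 2) =
      ∫⁻ t, ENNReal.ofReal (kernelMajorant M M' |t| ^ 2) := by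
    simp only [kernelMajorant_abs]
  rw [heven, lintegral_comp_abs (fun t => ENNReal.ofReal (kernelMajorant M M' t ^ 2)),
    ← Ioc_union_Ioi_eq_Ioi zero_le_one,
    lintegral_union measurableSet_Ioi Ioc_disjoint_Ioi_same,
    setLIntegral_Ioc_kernelMajorant_sq, setLIntegral_Ioi_one_kernelMajorant_sq,
    ← ENNReal.ofReal_add (by positivity) (by positivity), ← ENNReal.ofReal_ofNat 2,
    ← ENNReal.ofReal_mul zero_le_two]

theorem eLpNorm_kernelMajorant_le {M M' : ℝ} (hM : 0 ≤ M) (hM' : 0 ≤ M') :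
    eLpNorm (kernelMajorant M M') 2 volume ≤ ENNReal.ofReal (M + M') := by
  rw [← ENNReal.pow_le_pow_left_iff two_ne_zero, eLpNorm_two_sq_eq_lintegral,
    lintegral_kernelMajorant_sq, ← ENNReal.ofReal_pow (by positivity)]
  refine ENNReal.ofReal_le_ofReal ?_
  have hπ : 9 ≤ π ^ 2 := by nlinarith [pi_gt_three]
  rw [div_pow, div_pow, ← add_div, ← mul_div_assoc, div_le_iff₀ (by positivity)]
  calc 2 * (M' ^ 2 + (2 * M) ^ 2) ≤ (M ^ 2 + M' ^ 2) * 9 := by nlinarith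
    _ ≤ (M + M') ^ 2 * π ^ 2 := by gcongr; nlinarith [mul_nonneg hM hM']

theorem kernel_memL2_general {X : Type*} [MeasurableSpace X] (μ : Measure X) [IsProbabilityMeasure μ]
    (α : ℝ → X → X) (hα_meas : Measurable fun p : ℝ × X => α p.1 p.2)
    (hα_zero : ∀ x, α 0 x = x)
    (φ : X → ℂ) (hφ_meas : Measurable φ) (M : ℝ) (hM : ∀ x, ‖φ x‖ ≤ M)
    (φ' : X → ℂ) (hφ'_meas : Measurable φ') (M' : ℝ) (hM' : ∀ x, ‖φ' x‖ ≤ M')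
    (hderiv : ∀ x, ∀ t : ℝ, HasDerivAt (fun s : ℝ => φ (α s x)) (φ' (α t x)) t)
    (k : X × ℝ → ℂ)
    (hk : ∀ p : X × ℝ, k p = if p.2 = 0 then φ' p.1 / (π : ℂ)
      else (φ (α p.2 p.1) - φ p.1) / ((π : ℂ) * (p.2 : ℂ))) :
    MemLp k 2 (μ.prod volume) ∧
      eLpNorm k 2 (μ.prod volume) ≤ ENNReal.ofReal (M + M') := by
  obtain ⟨x₀⟩ := nonempty_of_isProbabilityMeasure μ
  have hk_meas : Measurable k := by
    rw [funext hk]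
    exact Measurable.ite (measurable_snd (measurableSet_singleton 0)) (by fun_prop)
      (((hφ_meas.comp (hα_meas.comp measurable_swap)).sub (hφ_meas.comp measurable_fst)).div
        (by fun_prop))
  have hk_le (p : X × ℝ) : ‖k p‖ ≤ kernelMajorant M M' p.2 := by
    simpa [slopeKernel, hk, hα_zero] using
      norm_slopeKernel_le (hderiv p.1) (fun _ => hM _) (fun _ => hM' _) p.2
  have hbound : eLpNorm k 2 (μ.prod volume) ≤ ENNReal.ofReal (M + M') :=
    (eLpNorm_prod_le_of_norm_le_comp_snd (measurable_kernelMajorant M M').aestronglyMeasurable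
      hk_le).trans <|
      eLpNorm_kernelMajorant_le ((norm_nonneg _).trans (hM x₀)) ((norm_nonneg _).trans (hM' x₀))
  exact ⟨⟨hk_meas.aestronglyMeasurable, hbound.trans_lt ENNReal.ofReal_lt_top⟩, hbound⟩

/-- Let `μ` be a probability measure on `X`, invariant under a jointly measurable flow `α` of
`ℝ` on `X`.  If `φ : X → ℂ` is measurable with `|φ| ≤ M` and is differentiable along the flow
with measurable derivative `φ'` satisfying `|φ'| ≤ M'`, then the kernel
`k_φ(x,t) = (φ(α t x) - φ x)/(π t)` (with value `φ'(x)/π` at `t = 0`) belongs to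
`L²(X × ℝ, μ ⊗ Leb)` with norm at most `M + M'`. -/
theorem kernel_memL2 {X : Type*} [MeasurableSpace X] (μ : Measure X) [IsProbabilityMeasure μ]
    (α : ℝ → X → X) (hα_meas : Measurable fun p : ℝ × X => α p.1 p.2)
    (hα_zero : ∀ x, α 0 x = x)
    (hα_add : ∀ s t : ℝ, ∀ x, α (s + t) x = α s (α t x))
    (hα_inv : ∀ t : ℝ, MeasurePreserving (α t) μ μ)
    (φ : X → ℂ) (hφ_meas : Measurable φ) (M : ℝ) (hM : ∀ x, ‖φ x‖ ≤ M)
    (φ' : X → ℂ) (hφ'_meas : Measurable φ') (M' : ℝ) (hM' : ∀ x, ‖φ' x‖ ≤ M')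
    (hderiv : ∀ x, ∀ t : ℝ, HasDerivAt (fun s : ℝ => φ (α s x)) (φ' (α t x)) t)
    (k : X × ℝ → ℂ)
    (hk : ∀ p : X × ℝ, k p = if p.2 = 0 then φ' p.1 / (π : ℂ)
      else (φ (α p.2 p.1) - φ p.1) / ((π : ℂ) * (p.2 : ℂ))) :
    MemLp k 2 (μ.prod volume) ∧
      eLpNorm k 2 (μ.prod volume) ≤ ENNReal.ofReal (M + M') :=
  kernel_memL2_general μ α hα_meas hα_zero φ hφ_meas M hM φ' hφ'_meas M' hM' hderiv k hk
end
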